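/- Let M ≥ 1, let h : ℤ² → M_M(ℂ) satisfy Σ_{(p,q)∈ℤ²} ‖h(p,q)‖_op < ∞ and h(−p,−q) = h(p,q)* for all (p,q). Let a₁, a₂ ∈ ℝ² be linearly independent, and let a₁*, a₂* ∈ ℝ² satisfy ⟨a_i*, a_j⟩ = 2π δ_{ij}. For κ ∈ ℝ², set 𝖧_κ := Σ_{(p,q)∈ℤ²} h(p,q) e^{−iκ·(p a₁ + q a₂)} (an M×M Hermitian matrix). Fix integers n, m ≥ 1 and k ∈ ℝ², and define the supercell Bloch matrix 𝖧̃_k, indexed by ({0,...,n−1} × {0,...,m−1}) × {1,...,M}, whose (row (i,j), column (i′,j′)) M×M block is Σ_{(p,q)∈ℤ²} h(np + i′ − i, mq + j′ − j) e^{−ik·(np a₁ + mq a₂)}. Then σ(𝖧̃_k) = ⋃_{r=0}^{n−1} ⋃_{s=0}^{m−1} σ(𝖧_{k + (r/n)a₁* + (s/m)a₂*}). -/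

import Mathlib

/-! The Bloch waves `w ↦ e^{-i κ_{rs}·(w₁ a₁ + w₂ a₂)}` on the coset representatives, with
`κ_{rs} = k + (r/n) a₁* + (s/m) a₂*`, tensored with the band index, block-diagonalize the
supercell matrix: the phases of `κ_{rs}` and of `k` agree on the supercell lattice, so summing a
row of `𝖧̃_k` against such a wave reassembles the full lattice sum defining `𝖧_{κ_{rs}}`. The
matrix of these waves is a diagonal phase times the Kronecker product of two Vandermonde
matrices at primitive roots of unity, hence invertible, and `𝖧̃_k` is similar to the block
diagonal matrix with blocks `𝖧_{κ_{rs}}`. -/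

open scoped ComplexConjugate Matrix

noncomputable section

/-- The bounded operator on ℂ^M associated with an M×M complex matrix;
its norm is the operator norm of the matrix. -/
noncomputable def matCLM {M : ℕ} (A : Matrix (Fin M) (Fin M) ℂ) :
    EuclideanSpace ℂ (Fin M) →L[ℂ] EuclideanSpace ℂ (Fin M) :=
  Matrix.toEuclideanCLM (𝕜 := ℂ) A

open Complex
open scoped Kronecker

lemma norm_apply_le_norm_matCLM {M : ℕ} (A : Matrix (Fin M) (Fin M) ℂ) (a b : Fin M) :
    ‖A a b‖ ≤ ‖matCLM A‖ :=
  calc ‖A a b‖ = ‖matCLM A (EuclideanSpace.single b 1) a‖ := by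
        simp [matCLM, ← PiLp.toLp_single, Matrix.toEuclideanCLM_toLp, Matrix.mulVec_single]
    _ ≤ ‖matCLM A (EuclideanSpace.single b 1)‖ := PiLp.norm_apply_le _ _
    _ ≤ ‖matCLM A‖ * ‖EuclideanSpace.single b (1 : ℂ)‖ := (matCLM A).le_opNorm _
    _ = ‖matCLM A‖ := by simp

lemma SemiconjBy.spectrum_eq {R A : Type*} [CommSemiring R] [Ring A] [Algebra R A] {u a b : A}
    (h : SemiconjBy u a b) (hu : IsUnit u) : spectrum R a = spectrum R b := by
  obtain ⟨u, rfl⟩ := hu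
  have hb : b = u * a * ↑u⁻¹ := by rw [h.eq, mul_assoc, Units.mul_inv, mul_one]
  rw [hb, spectrum.units_conjugate]

namespace Matrix

variable {K ι κ : Type*} [Field K] [Fintype ι] [DecidableEq ι] [Fintype κ] [DecidableEq κ]

lemma spectrum_blockDiagonal (B : κ → Matrix ι ι K) :
    spectrum K (blockDiagonal B) = ⋃ y, spectrum K (B y) := by
  ext μ
  have hsub : algebraMap K _ μ - blockDiagonal B =
      blockDiagonal fun y => algebraMap K _ μ - B y := by
    ext ⟨a, x⟩ ⟨b, y⟩
    by_cases hxy : x = y <;>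
      simp [Algebra.algebraMap_eq_smul_one, blockDiagonal_apply, one_apply, hxy]
  simp [spectrum.mem_iff, isUnit_iff_isUnit_det, hsub, det_blockDiagonal, Finset.prod_eq_zero_iff]

lemma reindex_prodComm_mul_one_kronecker {A : Matrix (κ × ι) (κ × ι) K} {F : Matrix κ κ K}
    {H : κ → Matrix ι ι K}
    (hA : ∀ x a y b, ∑ w, A (x, a) (w, b) * F w y = F x y * H y a b) :
    reindex (.prodComm κ ι) (.prodComm κ ι) A * (1 ⊗ₖ F) = (1 ⊗ₖ F) * blockDiagonal H := by
  ext ⟨a, x⟩ ⟨b, y⟩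
  simp [mul_apply, Fintype.sum_prod_type, one_apply, blockDiagonal_apply, hA]

theorem spectrum_eq_iUnion_of_sum_mul_eq_mul (A : Matrix (κ × ι) (κ × ι) K) (F : Matrix κ κ K)
    (hF : IsUnit F.det) (H : κ → Matrix ι ι K)
    (hA : ∀ x a y b, ∑ w, A (x, a) (w, b) * F w y = F x y * H y a b) :
    spectrum K A = ⋃ y, spectrum K (H y) := by
  have hV : IsUnit (1 ⊗ₖ F : Matrix (ι × κ) (ι × κ) K) := by
    rw [isUnit_iff_isUnit_det, det_kronecker, det_one, one_pow, one_mul]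
    exact hF.pow _
  rw [← spectrum_blockDiagonal, ← AlgEquiv.spectrum_eq (reindexAlgEquiv K K (.prodComm κ ι)) A]
  have hconj :
      SemiconjBy (1 ⊗ₖ F) (blockDiagonal H) (reindex (.prodComm κ ι) (.prodComm κ ι) A) :=
    (reindex_prodComm_mul_one_kronecker hA).symm
  exact (hconj.spectrum_eq hV).symm

end Matrix

section Supercell

variable (n m : ℕ) [NeZero n] [NeZero m]

def supercellEquiv : (Fin n × Fin m) × (ℤ × ℤ) ≃ ℤ × ℤ :=
  (Equiv.prodProdProdComm (Fin n) (Fin m) ℤ ℤ).trans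
    (((Equiv.prodComm _ _).trans (Int.divModEquiv n).symm).prodCongr
      ((Equiv.prodComm _ _).trans (Int.divModEquiv m).symm))

lemma supercellEquiv_apply (w : Fin n × Fin m) (pq : ℤ × ℤ) :
    supercellEquiv n m (w, pq) = (n * pq.1 + (w.1 : ℕ), m * pq.2 + (w.2 : ℕ)) := by
  simp [supercellEquiv, mul_comm]

lemma sum_tsum_supercell {E : Type*} [NormedAddCommGroup E] [CompleteSpace E]
    {g : ℤ × ℤ → E} (hg : Summable g) :
    ∑ w : Fin n × Fin m, ∑' pq : ℤ × ℤ, g (n * pq.1 + (w.1 : ℕ), m * pq.2 + (w.2 : ℕ)) =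
      ∑' P, g P := by
  have hge : Summable fun x => g (supercellEquiv n m x) :=
    (supercellEquiv n m).summable_iff.mpr hg
  rw [← (supercellEquiv n m).tsum_eq, hge.tsum_prod, tsum_fintype]
  simp [supercellEquiv_apply]

lemma sum_tsum_supercell_mul_addChar {f : ℤ × ℤ → ℂ} (χ : AddChar (ℤ × ℤ) ℂ)
    (hf : Summable fun P => f P * χ P) (i j : ℤ) :
    ∑ w : Fin n × Fin m,
        (∑' pq : ℤ × ℤ, f (n * pq.1 + (w.1 : ℕ) - i, m * pq.2 + (w.2 : ℕ) - j) *
          χ (n * pq.1, m * pq.2)) * χ ((w.1 : ℕ), (w.2 : ℕ)) =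
      χ (i, j) * ∑' P, f P * χ P := by
  set g : ℤ × ℤ → ℂ := fun P => f (P - (i, j)) * χ (P - (i, j))
  have hg : Summable g := (Equiv.subRight (i, j)).summable_iff.mpr hf
  have hterm : ∀ (w : Fin n × Fin m) (pq : ℤ × ℤ),
      f (n * pq.1 + (w.1 : ℕ) - i, m * pq.2 + (w.2 : ℕ) - j) * χ (n * pq.1, m * pq.2) *
        χ ((w.1 : ℕ), (w.2 : ℕ)) =
          χ (i, j) * g (n * pq.1 + (w.1 : ℕ), m * pq.2 + (w.2 : ℕ)) := by
    intro w pq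
    have hχ : χ (n * pq.1, m * pq.2) * χ ((w.1 : ℕ), (w.2 : ℕ)) =
        χ (i, j) * χ (n * pq.1 + (w.1 : ℕ) - i, m * pq.2 + (w.2 : ℕ) - j) := by
      rw [← AddChar.map_add_eq_mul, ← AddChar.map_add_eq_mul, Prod.mk_add_mk, Prod.mk_add_mk]
      congr 2 <;> ring
    simp only [g, Prod.mk_sub_mk, mul_assoc, hχ]
    ring
  simp_rw [← tsum_mul_right, hterm, tsum_mul_left, ← Finset.mul_sum, sum_tsum_supercell n m hg]
  exact congrArg _ ((Equiv.subRight (i, j)).tsum_eq (fun P => f P * χ P))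

end Supercell

section Bloch

variable {E : Type*} [NormedAddCommGroup E] [InnerProductSpace ℝ E] (a₁ a₂ : E)

def blochChar (κ : E) : AddChar (ℤ × ℤ) ℂ where
  toFun P := exp (-(I * ((inner ℝ κ ((P.1 : ℝ) • a₁ + (P.2 : ℝ) • a₂) : ℝ) : ℂ)))
  map_zero_eq_one' := by simp
  map_add_eq_mul' P Q := by
    rw [← exp_add]
    simp only [Prod.fst_add, Prod.snd_add, Int.cast_add, add_smul, inner_add_right]
    push_cast
    ring_nf

lemma blochChar_apply (κ : E) (P : ℤ × ℤ) :
    blochChar a₁ a₂ κ P = exp (-(I * ((inner ℝ κ ((P.1 : ℝ) • a₁ + (P.2 : ℝ) • a₂) : ℝ) : ℂ))) :=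
  rfl

lemma norm_blochChar (κ : E) (P : ℤ × ℤ) : ‖blochChar a₁ a₂ κ P‖ = 1 := by
  simp [blochChar_apply, norm_exp]

variable {a₁ a₂} {a₁s a₂s : E}

lemma blochChar_add_dual (h11 : inner ℝ a₁s a₁ = 2 * Real.pi) (h12 : inner ℝ a₁s a₂ = 0)
    (h21 : inner ℝ a₂s a₁ = 0) (h22 : inner ℝ a₂s a₂ = 2 * Real.pi) (κ : E) (x y : ℝ)
    (P : ℤ × ℤ) :
    blochChar a₁ a₂ (κ + x • a₁s + y • a₂s) P =
      blochChar a₁ a₂ κ P * exp (-(2 * Real.pi * I * (x * P.1 + y * P.2))) := by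
  simp only [blochChar_apply, ← exp_add, inner_add_left, real_inner_smul_left, inner_add_right,
    real_inner_smul_right, h11, h12, h21, h22]
  congr 1
  push_cast
  ring

lemma blochChar_add_dual_supercell (h11 : inner ℝ a₁s a₁ = 2 * Real.pi)
    (h12 : inner ℝ a₁s a₂ = 0) (h21 : inner ℝ a₂s a₁ = 0) (h22 : inner ℝ a₂s a₂ = 2 * Real.pi)
    (κ : E) (n m : ℕ) [NeZero n] [NeZero m] (r s : ℕ) (p q : ℤ) :
    blochChar a₁ a₂ (κ + ((r : ℝ) / n) • a₁s + ((s : ℝ) / m) • a₂s) (n * p, m * q) =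
      blochChar a₁ a₂ κ (n * p, m * q) := by
  rw [blochChar_add_dual h11 h12 h21 h22]
  convert mul_one _
  have hn : (n : ℂ) ≠ 0 := NeZero.ne _
  have hm : (m : ℂ) ≠ 0 := NeZero.ne _
  convert exp_int_mul_two_pi_mul_I (-(r * p + s * q)) using 2
  push_cast
  field_simp

lemma blochChar_add_dual_cell (h11 : inner ℝ a₁s a₁ = 2 * Real.pi)
    (h12 : inner ℝ a₁s a₂ = 0) (h21 : inner ℝ a₂s a₁ = 0) (h22 : inner ℝ a₂s a₂ = 2 * Real.pi)
    (κ : E) (n m : ℕ) (r s w₁ w₂ : ℕ) :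
    blochChar a₁ a₂ (κ + ((r : ℝ) / n) • a₁s + ((s : ℝ) / m) • a₂s) (w₁, w₂) =
      blochChar a₁ a₂ κ (w₁, w₂) * exp (-(2 * Real.pi * I / n)) ^ (w₁ * r) *
        exp (-(2 * Real.pi * I / m)) ^ (w₂ * s) := by
  rw [blochChar_add_dual h11 h12 h21 h22, ← exp_nat_mul, ← exp_nat_mul, mul_assoc _ (exp _),
    ← exp_add]
  congr 2
  push_cast
  ring

end Bloch

lemma IsPrimitiveRoot.det_vandermonde_pow_ne_zero {K : Type*} [Field K] {n : ℕ} {ζ : K}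
    (hζ : IsPrimitiveRoot ζ n) : (Matrix.vandermonde fun i : Fin n => ζ ^ (i : ℕ)).det ≠ 0 :=
  Matrix.det_vandermonde_ne_zero_iff.mpr fun i j hij => Fin.ext (hζ.pow_inj i.2 j.2 hij)

open Matrix in
lemma isUnit_det_of_apply_eq_mul_pow_mul_pow {K : Type*} [Field K] {n m : ℕ} {ζ ξ : K}
    (hζ : IsPrimitiveRoot ζ n) (hξ : IsPrimitiveRoot ξ m) {c : Fin n × Fin m → K}
    (hc : ∀ w, c w ≠ 0) {F : Matrix (Fin n × Fin m) (Fin n × Fin m) K}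
    (hF : ∀ w y, F w y = c w * ζ ^ ((w.1 : ℕ) * y.1) * ξ ^ ((w.2 : ℕ) * y.2)) :
    IsUnit F.det := by
  have hfactor : F = diagonal c *
      (vandermonde (fun i : Fin n => ζ ^ (i : ℕ)) ⊗ₖ vandermonde fun j : Fin m => ξ ^ (j : ℕ)) := by
    ext w y
    simp [hF, vandermonde_apply, pow_mul, mul_assoc]
  rw [hfactor, det_mul, det_diagonal, det_kronecker, isUnit_iff_ne_zero]
  exact mul_ne_zero (Finset.prod_ne_zero_iff.mpr fun w _ => hc w)
    (mul_ne_zero (pow_ne_zero _ hζ.det_vandermonde_pow_ne_zero)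
      (pow_ne_zero _ hξ.det_vandermonde_pow_ne_zero))

theorem statement14_general (M n m : ℕ) (hn : 1 ≤ n) (hm : 1 ≤ m)
    (h : ℤ × ℤ → Matrix (Fin M) (Fin M) ℂ)
    (hsum : Summable fun pq : ℤ × ℤ => ‖matCLM (h pq)‖)
    (a₁ a₂ a₁s a₂s : EuclideanSpace ℝ (Fin 2))
    (h11 : (inner ℝ a₁s a₁ : ℝ) = 2 * Real.pi) (h12 : (inner ℝ a₁s a₂ : ℝ) = 0)
    (h21 : (inner ℝ a₂s a₁ : ℝ) = 0) (h22 : (inner ℝ a₂s a₂ : ℝ) = 2 * Real.pi)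
    (k : EuclideanSpace ℝ (Fin 2))
    (Hbulk : EuclideanSpace ℝ (Fin 2) → Matrix (Fin M) (Fin M) ℂ)
    (hHbulk : ∀ (κ : EuclideanSpace ℝ (Fin 2)) (r s : Fin M),
      Hbulk κ r s = ∑' pq : ℤ × ℤ,
        h pq r s *
          Complex.exp (-(Complex.I *
            ((inner ℝ κ ((pq.1 : ℝ) • a₁ + (pq.2 : ℝ) • a₂) : ℝ) : ℂ))))
    (Htilde : Matrix ((Fin n × Fin m) × Fin M) ((Fin n × Fin m) × Fin M) ℂ)
    (hHtilde : ∀ (i : Fin n) (j : Fin m) (r : Fin M) (i' : Fin n) (j' : Fin m) (s : Fin M),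
      Htilde ((i, j), r) ((i', j'), s) = ∑' pq : ℤ × ℤ,
        h ((n : ℤ) * pq.1 + ((i' : ℕ) : ℤ) - ((i : ℕ) : ℤ),
           (m : ℤ) * pq.2 + ((j' : ℕ) : ℤ) - ((j : ℕ) : ℤ)) r s *
          Complex.exp (-(Complex.I *
            ((inner ℝ k (((n : ℝ) * (pq.1 : ℝ)) • a₁ + ((m : ℝ) * (pq.2 : ℝ)) • a₂) : ℝ) : ℂ)))) :
    spectrum ℂ Htilde = ⋃ r : Fin n, ⋃ s : Fin m,
      spectrum ℂ
        (Hbulk (k + (((r : ℕ) : ℝ) / (n : ℝ)) • a₁s + (((s : ℕ) : ℝ) / (m : ℝ)) • a₂s)) := by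
  have : NeZero n := ⟨by omega⟩
  have : NeZero m := ⟨by omega⟩
  set κ : Fin n × Fin m → EuclideanSpace ℝ (Fin 2) := fun y =>
    k + (((y.1 : ℕ) : ℝ) / n) • a₁s + (((y.2 : ℕ) : ℝ) / m) • a₂s
  have hsummable (κ : EuclideanSpace ℝ (Fin 2)) (a b : Fin M) :
      Summable fun P => h P a b * blochChar a₁ a₂ κ P :=
    .of_norm_bounded hsum fun P => by
      rw [norm_mul, norm_blochChar, mul_one]
      exact norm_apply_le_norm_matCLM _ _ _
  have htilde (i : Fin n) (j : Fin m) (a : Fin M) (w y : Fin n × Fin m) (b : Fin M) :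
      Htilde ((i, j), a) (w, b) = ∑' pq : ℤ × ℤ,
        h (n * pq.1 + ((w.1 : ℕ) : ℤ) - ((i : ℕ) : ℤ),
          m * pq.2 + ((w.2 : ℕ) : ℤ) - ((j : ℕ) : ℤ)) a b *
          blochChar a₁ a₂ (κ y) (n * pq.1, m * pq.2) := by
    simp only [hHtilde, κ, blochChar_add_dual_supercell h11 h12 h21 h22, blochChar_apply]
    push_cast
    rfl
  have hroot (N : ℕ) [NeZero N] : IsPrimitiveRoot (exp (-(2 * Real.pi * I / N))) N := by
    simpa [exp_neg] using (isPrimitiveRoot_exp N (NeZero.ne N)).inv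
  have hF : IsUnit (Matrix.of fun w y => blochChar a₁ a₂ (κ y) ((w.1 : ℕ), (w.2 : ℕ))).det :=
    isUnit_det_of_apply_eq_mul_pow_mul_pow (hroot n) (hroot m)
      (fun w => by simp [← norm_ne_zero_iff, norm_blochChar])
      (fun w y => blochChar_add_dual_cell h11 h12 h21 h22 k n m _ _ _ _)
  rw [Matrix.spectrum_eq_iUnion_of_sum_mul_eq_mul Htilde _ hF (fun y => Hbulk (κ y)),
    Set.iUnion_prod']
  rintro ⟨i, j⟩ a y b
  simp only [Matrix.of_apply, htilde _ _ _ _ y, hHbulk]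
  exact sum_tsum_supercell_mul_addChar n m _ (hsummable _ a b) _ _

/-- band folding for a supercell of a two-dimensional tight-binding
model. The spectrum of the supercell Bloch matrix 𝖧̃_k, built from the sublattice
(n a₁)ℤ ⊕ (m a₂)ℤ with coset representatives i a₁ + j a₂, equals the union of the
spectra of the original Bloch fibers 𝖧_{k + (r/n)a₁* + (s/m)a₂*}. -/
theorem statement14 (M n m : ℕ) (hM : 1 ≤ M) (hn : 1 ≤ n) (hm : 1 ≤ m)
    (h : ℤ × ℤ → Matrix (Fin M) (Fin M) ℂ)
    (hsum : Summable fun pq : ℤ × ℤ => ‖matCLM (h pq)‖)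
    (hsym : ∀ pq : ℤ × ℤ, h (-pq.1, -pq.2) = (h pq)ᴴ)
    (a₁ a₂ a₁s a₂s : EuclideanSpace ℝ (Fin 2))
    (hindep : LinearIndependent ℝ ![a₁, a₂])
    (h11 : (inner ℝ a₁s a₁ : ℝ) = 2 * Real.pi) (h12 : (inner ℝ a₁s a₂ : ℝ) = 0)
    (h21 : (inner ℝ a₂s a₁ : ℝ) = 0) (h22 : (inner ℝ a₂s a₂ : ℝ) = 2 * Real.pi)
    (k : EuclideanSpace ℝ (Fin 2))
    (Hbulk : EuclideanSpace ℝ (Fin 2) → Matrix (Fin M) (Fin M) ℂ)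
    (hHbulk : ∀ (κ : EuclideanSpace ℝ (Fin 2)) (r s : Fin M),
      Hbulk κ r s = ∑' pq : ℤ × ℤ,
        h pq r s *
          Complex.exp (-(Complex.I *
            ((inner ℝ κ ((pq.1 : ℝ) • a₁ + (pq.2 : ℝ) • a₂) : ℝ) : ℂ))))
    (Htilde : Matrix ((Fin n × Fin m) × Fin M) ((Fin n × Fin m) × Fin M) ℂ)
    (hHtilde : ∀ (i : Fin n) (j : Fin m) (r : Fin M) (i' : Fin n) (j' : Fin m) (s : Fin M),
      Htilde ((i, j), r) ((i', j'), s) = ∑' pq : ℤ × ℤ,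
        h ((n : ℤ) * pq.1 + ((i' : ℕ) : ℤ) - ((i : ℕ) : ℤ),
           (m : ℤ) * pq.2 + ((j' : ℕ) : ℤ) - ((j : ℕ) : ℤ)) r s *
          Complex.exp (-(Complex.I *
            ((inner ℝ k (((n : ℝ) * (pq.1 : ℝ)) • a₁ + ((m : ℝ) * (pq.2 : ℝ)) • a₂) : ℝ) : ℂ)))) :
    spectrum ℂ Htilde = ⋃ r : Fin n, ⋃ s : Fin m,
      spectrum ℂ
        (Hbulk (k + (((r : ℕ) : ℝ) / (n : ℝ)) • a₁s + (((s : ℕ) : ℝ) / (m : ℝ)) • a₂s)) :=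
  statement14_general M n m hn hm h hsum a₁ a₂ a₁s a₂s h11 h12 h21 h22 k Hbulk hHbulk Htilde hHtilde
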